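/- arXiv:2312.17209 — 5 statements merged into one kernel-verified Lean document; each statement's English description precedes it below -/
import Mathlib

section
/- Let κ > 1, let x, ν, m be unit vectors in ℝ³ with x·ν ≥ 0, satisfying x − κm = λν where λ = x·ν − √(κ² − 1 + (x·ν)²). Then x·m ≥ 1/κ. -/
open Matrix

theorem stmt2 (κ lam : ℝ) (hκ : 1 < κ) (x ν m : Fin 3 → ℝ)
    (hx : x ⬝ᵥ x = 1) (hν : ν ⬝ᵥ ν = 1) (hm : m ⬝ᵥ m = 1) (hxν : 0 ≤ x ⬝ᵥ ν)
    (hlam : lam = x ⬝ᵥ ν - Real.sqrt (κ^2 - 1 + (x ⬝ᵥ ν)^2))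
    (hSnell : x - κ • m = lam • ν) :
    1/κ ≤ x ⬝ᵥ m := by
  have hκ0 : (0:ℝ) < κ := by linarith
  have hdot : (x - κ • m) ⬝ᵥ x = (lam • ν) ⬝ᵥ x := by rw [hSnell]
  have h1 : 1 - κ * (x ⬝ᵥ m) = lam * (x ⬝ᵥ ν) := by
    rw [sub_dotProduct, smul_dotProduct, smul_dotProduct, hx, dotProduct_comm ν x,
      dotProduct_comm m x] at hdot
    simpa using hdot
  have hlam0 : lam ≤ 0 := by
    rw [hlam]
    have : x ⬝ᵥ ν ≤ Real.sqrt (κ^2 - 1 + (x ⬝ᵥ ν)^2) := by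
      have h := Real.sqrt_le_sqrt (show (x ⬝ᵥ ν)^2 ≤ κ^2 - 1 + (x ⬝ᵥ ν)^2 by nlinarith)
      rwa [Real.sqrt_sq hxν] at h
    linarith
  have h2 : lam * (x ⬝ᵥ ν) ≤ 0 := mul_nonpos_of_nonpos_of_nonneg hlam0 hxν
  rw [div_le_iff₀ hκ0]
  nlinarith
end

section
/- Let 0 < κ < 1, let x, ν, m be unit vectors in ℝ³ with x·ν ≥ √(1 − κ²), satisfying x − κm = λν where λ = x·ν − √(κ² − 1 + (x·ν)²). Then x·m ≥ κ. -/
open Matrix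

theorem stmt3 (κ lam : ℝ) (hκ0 : 0 < κ) (hκ : κ < 1) (x ν m : Fin 3 → ℝ)
    (hx : x ⬝ᵥ x = 1) (hν : ν ⬝ᵥ ν = 1) (hm : m ⬝ᵥ m = 1)
    (hxν : Real.sqrt (1 - κ^2) ≤ x ⬝ᵥ ν)
    (hlam : lam = x ⬝ᵥ ν - Real.sqrt (κ^2 - 1 + (x ⬝ᵥ ν)^2))
    (hSnell : x - κ • m = lam • ν) :
    κ ≤ x ⬝ᵥ m := by
  set t := x ⬝ᵥ ν with htdef
  set s := Real.sqrt (κ^2 - 1 + t^2) with hsdef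
  have h1κ : (0:ℝ) ≤ 1 - κ^2 := by nlinarith
  have ht0 : 0 ≤ t := le_trans (Real.sqrt_nonneg _) hxν
  have ht2 : 1 - κ^2 ≤ t^2 := by
    nlinarith [Real.sq_sqrt h1κ, Real.sqrt_nonneg (1 - κ^2)]
  have hnn : 0 ≤ κ^2 - 1 + t^2 := by linarith
  have hs0 : 0 ≤ s := Real.sqrt_nonneg _
  have hs2 : s^2 = κ^2 - 1 + t^2 := Real.sq_sqrt hnn
  have hst : s ≤ t := by
    calc s ≤ Real.sqrt (t^2) := Real.sqrt_le_sqrt (by linarith)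
    _ = t := Real.sqrt_sq ht0
  have eq1 : (x - κ • m) ⬝ᵥ x = (lam • ν) ⬝ᵥ x := by rw [hSnell]
  simp only [sub_dotProduct, smul_dotProduct, smul_eq_mul, hx] at eq1
  have hcm : m ⬝ᵥ x = x ⬝ᵥ m := dotProduct_comm _ _
  have hcv : ν ⬝ᵥ x = t := dotProduct_comm _ _
  rw [hcm, hcv, hlam] at eq1
  -- eq1 : 1 - κ * (x ⬝ᵥ m) = (t - s) * t
  nlinarith [mul_nonneg hs0 (sub_nonneg.2 hst), mul_pos hκ0 hκ0]
end

section
/- Let κ₁ > 1, ρ : Ω → ℝ of class C² on Ω ⊆ ℝ² open, Δ = √(κ₁² + (κ₁²−1)|Dρ|²), and m given by the vertical-field refraction formula m = (1/κ₁)((1−κ₁²)/(1+Δ)·Dρ, 1 + (κ₁²−1)/(1+Δ)). Then the 2×2 matrix Dm ⊗ Dm := (∂ᵢm · ∂ⱼm)ᵢⱼ equals ((κ₁²−1)²/(κ₁²(1+Δ)²)) · D²ρ · (I − ((κ₁²−1)/Δ²) Dρ ⊗ Dρ) · D²ρ. -/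
open Matrix
set_option maxHeartbeats 2000000

theorem stmt8 (κ₁ : ℝ) (hκ : 1 < κ₁) (Ω : Set (Fin 2 → ℝ)) (hΩ : IsOpen Ω)
    (ρ : (Fin 2 → ℝ) → ℝ) (hρ : ContDiffOn ℝ 2 ρ Ω)
    (Dρ : (Fin 2 → ℝ) → (Fin 2 → ℝ))
    (hDρ : ∀ x, ∀ i, Dρ x i = fderiv ℝ ρ x (Pi.single i 1))
    (Hρ : (Fin 2 → ℝ) → Matrix (Fin 2) (Fin 2) ℝ)
    (hHρ : ∀ x, Hρ x = Matrix.of fun i j =>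
      fderiv ℝ (fun y => fderiv ℝ ρ y (Pi.single j 1)) x (Pi.single i 1))
    (Δ : (Fin 2 → ℝ) → ℝ)
    (hΔ : ∀ x, Δ x = Real.sqrt (κ₁^2 + (κ₁^2 - 1) * (Dρ x ⬝ᵥ Dρ x)))
    (m : (Fin 2 → ℝ) → (Fin 3 → ℝ))
    (hm : ∀ x, m x = (1/κ₁) •
      ![(1 - κ₁^2)/(1 + Δ x) * Dρ x 0, (1 - κ₁^2)/(1 + Δ x) * Dρ x 1,
        1 + (κ₁^2 - 1)/(1 + Δ x)]) :
    ∀ x ∈ Ω,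
      (Matrix.of fun i j : Fin 2 =>
        (fun k : Fin 3 => fderiv ℝ (fun y => m y k) x (Pi.single i 1)) ⬝ᵥ
        (fun k : Fin 3 => fderiv ℝ (fun y => m y k) x (Pi.single j 1))) =
      ((κ₁^2 - 1)^2 / (κ₁^2 * (1 + Δ x)^2)) •
        (Hρ x * ((1 : Matrix (Fin 2) (Fin 2) ℝ)
            - ((κ₁^2 - 1)/(Δ x)^2) • vecMulVec (Dρ x) (Dρ x)) * Hρ x) := by
  intro x hx
  have hΩx : Ω ∈ nhds x := hΩ.mem_nhds hx
  have h2 : ContDiffAt ℝ 2 ρ x := hρ.contDiffAt hΩx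
  have hf1 : ContDiffAt ℝ 1 (fderiv ℝ ρ) x := h2.fderiv_right (by norm_num)
  set B := fderiv ℝ (fderiv ℝ ρ) x with hBdef
  have hB : HasFDerivAt (fderiv ℝ ρ) B x := (hf1.differentiableAt (by norm_num)).hasFDerivAt
  have hev : ∀ᶠ y in nhds x, HasFDerivAt ρ (fderiv ℝ ρ y) y := by
    filter_upwards [hΩx] with y hy
    exact ((hρ.contDiffAt (hΩ.mem_nhds hy)).differentiableAt (by norm_num)).hasFDerivAt
  have hsymm : ∀ v w, B v w = B w v := second_derivative_symmetric_of_eventually hev hB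
  set g : Fin 2 → (Fin 2 → ℝ) → ℝ := fun j y => fderiv ℝ ρ y (Pi.single j 1) with hgdef
  set L : Fin 2 → ((Fin 2 → ℝ) →L[ℝ] ℝ) :=
    fun j => (ContinuousLinearMap.apply ℝ ℝ ((Pi.single j 1 : Fin 2 → ℝ))).comp B with hLdef
  have hg : ∀ j : Fin 2, HasFDerivAt (g j) (L j) x :=
    fun j => by simpa [Function.comp_def] using
      (ContinuousLinearMap.apply ℝ ℝ ((Pi.single j 1 : Fin 2 → ℝ))).hasFDerivAt.comp x hB
  set q : (Fin 2 → ℝ) → ℝ :=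
    fun y => κ₁^2 + (κ₁^2 - 1) * (g 0 y * g 0 y + g 1 y * g 1 y) with hqdef
  set Q : (Fin 2 → ℝ) →L[ℝ] ℝ :=
    (κ₁^2 - 1) • ((g 0 x • L 0 + g 0 x • L 0) + (g 1 x • L 1 + g 1 x • L 1)) with hQdef
  have hq : HasFDerivAt q Q x :=
    ((((hg 0).mul (hg 0)).add ((hg 1).mul (hg 1))).const_mul (κ₁^2 - 1)).const_add (κ₁^2)
  have hqpos : 0 < q x := by
    have h1 : (0:ℝ) < κ₁^2 - 1 := by nlinarith
    have := mul_self_nonneg (g 0 x); have := mul_self_nonneg (g 1 x)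
    simp only [hqdef]; nlinarith
  set δ := Real.sqrt (q x) with hδdef
  have hδpos : 0 < δ := Real.sqrt_pos.2 hqpos
  have hδsq : δ^2 = q x := Real.sq_sqrt hqpos.le
  have hΔq : ∀ y, Δ y = Real.sqrt (q y) := by
    intro y
    rw [hΔ y]
    congr 1
    simp only [hqdef, dotProduct, Fin.sum_univ_two, hDρ, hgdef]
  have hΔx : Δ x = δ := hΔq x
  have hsq : HasFDerivAt (fun y => Real.sqrt (q y)) ((1/(2*δ)) • Q) x := hq.sqrt hqpos.ne'
  have hdx : (1:ℝ) + δ ≠ 0 := by positivity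
  have houter : HasDerivAt (fun t : ℝ => (1 - κ₁^2)/(1 + t)) (-(1 - κ₁^2)/(1 + δ)^2) δ := by
    have h1 : HasDerivAt (fun t : ℝ => 1 + t) 1 δ := by
      simpa using (hasDerivAt_id δ).const_add 1
    have := (hasDerivAt_const δ (1 - κ₁^2)).div h1 hdx
    exact this.congr_deriv (by ring)
  have houter2 : HasDerivAt (fun t : ℝ => (κ₁^2 - 1)/(1 + t)) (-(κ₁^2 - 1)/(1 + δ)^2) δ := by
    have h1 : HasDerivAt (fun t : ℝ => 1 + t) 1 δ := by
      simpa using (hasDerivAt_id δ).const_add 1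
    have := (hasDerivAt_const δ (κ₁^2 - 1)).div h1 hdx
    exact this.congr_deriv (by ring)
  have hr : HasFDerivAt (fun y => (1 - κ₁^2)/(1 + Real.sqrt (q y)))
      ((-(1 - κ₁^2)/(1 + δ)^2) • ((1/(2*δ)) • Q)) x := by
    simpa [Function.comp_def] using houter.comp_hasFDerivAt x hsq
  have hr2 : HasFDerivAt (fun y => (κ₁^2 - 1)/(1 + Real.sqrt (q y)))
      ((-(κ₁^2 - 1)/(1 + δ)^2) • ((1/(2*δ)) • Q)) x := by
    simpa [Function.comp_def] using houter2.comp_hasFDerivAt x hsq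
  -- component functions of m
  have hm0 : (fun y => m y 0) =
      fun y => 1/κ₁ * ((1 - κ₁^2)/(1 + Real.sqrt (q y)) * g 0 y) := by
    funext y; rw [hm y]; simp [hΔq y, hDρ, hgdef]
  have hm1 : (fun y => m y 1) =
      fun y => 1/κ₁ * ((1 - κ₁^2)/(1 + Real.sqrt (q y)) * g 1 y) := by
    funext y; rw [hm y]; simp [hΔq y, hDρ, hgdef]
  have hm2 : (fun y => m y 2) =
      fun y => 1/κ₁ * (1 + (κ₁^2 - 1)/(1 + Real.sqrt (q y))) := by
    funext y; rw [hm y]; simp [hΔq y, hDρ, hgdef]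
  have hd0 : HasFDerivAt (fun y => 1/κ₁ * ((1 - κ₁^2)/(1 + Real.sqrt (q y)) * g 0 y)) _ x :=
    (hr.mul (hg 0)).const_mul (1/κ₁)
  have hd1 : HasFDerivAt (fun y => 1/κ₁ * ((1 - κ₁^2)/(1 + Real.sqrt (q y)) * g 1 y)) _ x :=
    (hr.mul (hg 1)).const_mul (1/κ₁)
  have hd2 : HasFDerivAt (fun y => 1/κ₁ * (1 + (κ₁^2 - 1)/(1 + Real.sqrt (q y)))) _ x :=
    (hr2.const_add 1).const_mul (1/κ₁)
  have hgf : ∀ j : Fin 2, fderiv ℝ (fun y => fderiv ℝ ρ y (Pi.single j 1)) x = L j :=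
    fun j => (hg j).fderiv
  ext i j
  simp only [Matrix.of_apply, dotProduct, Fin.sum_univ_three]
  rw [hm0, hm1, hm2, hd0.fderiv, hd1.fderiv, hd2.fderiv, hHρ, hΔx]
  simp only [Matrix.mul_apply, Matrix.smul_apply, Matrix.sub_apply, Matrix.one_apply,
    vecMulVec_apply, Matrix.of_apply, Fin.sum_univ_two, hgf, hDρ, smul_eq_mul]
  have hsq' : δ^2 = κ₁^2 + (κ₁^2 - 1) *
      (fderiv ℝ ρ x (Pi.single (0:Fin 2) 1) * fderiv ℝ ρ x (Pi.single (0:Fin 2) 1) +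
       fderiv ℝ ρ x (Pi.single (1:Fin 2) 1) * fderiv ℝ ρ x (Pi.single (1:Fin 2) 1)) := hδsq
  have hsym01 : B (Pi.single (0:Fin 2) 1) (Pi.single (1:Fin 2) 1)
      = B (Pi.single (1:Fin 2) 1) (Pi.single (0:Fin 2) 1) := hsymm _ _
  have hκ0 : κ₁ ≠ 0 := by positivity
  have hδ0 : δ ≠ 0 := hδpos.ne'
  clear_value B
  fin_cases i <;> fin_cases j <;>
    simp only [hQdef, hLdef, hgdef, ContinuousLinearMap.smul_apply,
      ContinuousLinearMap.add_apply, ContinuousLinearMap.comp_apply,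
      ContinuousLinearMap.apply_apply, smul_eq_mul, Fin.mk_zero, Fin.mk_one, ← hδdef,
      Matrix.one_apply, reduceIte]
  · simp only [show ((1:Fin 2) = 0) = False from by decide,
      show ((0:Fin 2) = 1) = False from by decide, if_false]
    generalize hB00 : B (Pi.single (0:Fin 2) 1) (Pi.single (0:Fin 2) 1) = h00 at hsq' hsym01 ⊢
    generalize hB01 : B (Pi.single (0:Fin 2) 1) (Pi.single (1:Fin 2) 1) = h01 at hsq' hsym01 ⊢
    generalize hB10 : B (Pi.single (1:Fin 2) 1) (Pi.single (0:Fin 2) 1) = h10 at hsq' hsym01 ⊢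
    generalize hB11 : B (Pi.single (1:Fin 2) 1) (Pi.single (1:Fin 2) 1) = h11 at hsq' hsym01 ⊢
    generalize hv0 : fderiv ℝ ρ x (Pi.single (0:Fin 2) 1) = v0 at hsq' ⊢
    generalize hv1 : fderiv ℝ ρ x (Pi.single (1:Fin 2) 1) = v1 at hsq' ⊢
    rw [hsym01]
    field_simp [hκ0, hδ0, hdx]
    linear_combination (-4*(κ₁^2-1)^3*(h00*v0 + v1*h10)^2) * hsq'
  · simp only [show ((1:Fin 2) = 0) = False from by decide,
      show ((0:Fin 2) = 1) = False from by decide, if_false]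
    generalize hB00 : B (Pi.single (0:Fin 2) 1) (Pi.single (0:Fin 2) 1) = h00 at hsq' hsym01 ⊢
    generalize hB01 : B (Pi.single (0:Fin 2) 1) (Pi.single (1:Fin 2) 1) = h01 at hsq' hsym01 ⊢
    generalize hB10 : B (Pi.single (1:Fin 2) 1) (Pi.single (0:Fin 2) 1) = h10 at hsq' hsym01 ⊢
    generalize hB11 : B (Pi.single (1:Fin 2) 1) (Pi.single (1:Fin 2) 1) = h11 at hsq' hsym01 ⊢
    generalize hv0 : fderiv ℝ ρ x (Pi.single (0:Fin 2) 1) = v0 at hsq' ⊢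
    generalize hv1 : fderiv ℝ ρ x (Pi.single (1:Fin 2) 1) = v1 at hsq' ⊢
    rw [hsym01]
    field_simp [hκ0, hδ0, hdx]
    linear_combination (-4*(κ₁^2-1)^3*(h00*v0 + v1*h10)*(h10*v0 + h11*v1)) * hsq'
  · simp only [show ((1:Fin 2) = 0) = False from by decide,
      show ((0:Fin 2) = 1) = False from by decide, if_false]
    generalize hB00 : B (Pi.single (0:Fin 2) 1) (Pi.single (0:Fin 2) 1) = h00 at hsq' hsym01 ⊢
    generalize hB01 : B (Pi.single (0:Fin 2) 1) (Pi.single (1:Fin 2) 1) = h01 at hsq' hsym01 ⊢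
    generalize hB10 : B (Pi.single (1:Fin 2) 1) (Pi.single (0:Fin 2) 1) = h10 at hsq' hsym01 ⊢
    generalize hB11 : B (Pi.single (1:Fin 2) 1) (Pi.single (1:Fin 2) 1) = h11 at hsq' hsym01 ⊢
    generalize hv0 : fderiv ℝ ρ x (Pi.single (0:Fin 2) 1) = v0 at hsq' ⊢
    generalize hv1 : fderiv ℝ ρ x (Pi.single (1:Fin 2) 1) = v1 at hsq' ⊢
    rw [hsym01]
    field_simp [hκ0, hδ0, hdx]
    linear_combination (-4*(κ₁^2-1)^3*(h00*v0 + v1*h10)*(h10*v0 + h11*v1)) * hsq'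
  · simp only [show ((1:Fin 2) = 0) = False from by decide,
      show ((0:Fin 2) = 1) = False from by decide, if_false]
    generalize hB00 : B (Pi.single (0:Fin 2) 1) (Pi.single (0:Fin 2) 1) = h00 at hsq' hsym01 ⊢
    generalize hB01 : B (Pi.single (0:Fin 2) 1) (Pi.single (1:Fin 2) 1) = h01 at hsq' hsym01 ⊢
    generalize hB10 : B (Pi.single (1:Fin 2) 1) (Pi.single (0:Fin 2) 1) = h10 at hsq' hsym01 ⊢
    generalize hB11 : B (Pi.single (1:Fin 2) 1) (Pi.single (1:Fin 2) 1) = h11 at hsq' hsym01 ⊢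
    generalize hv0 : fderiv ℝ ρ x (Pi.single (0:Fin 2) 1) = v0 at hsq' ⊢
    generalize hv1 : fderiv ℝ ρ x (Pi.single (1:Fin 2) 1) = v1 at hsq' ⊢
    rw [hsym01]
    field_simp [hκ0, hδ0, hdx]
    linear_combination (-4*(κ₁^2-1)^3*(h10*v0 + h11*v1)^2) * hsq'
end

section
/- Let κ₁ > 1, a > 0, and suppose x ∈ ℝ², ρ ∈ ℝ, S ∈ ℝ² satisfy a > a − ρ > |S|/√(κ₁²−1), and Dρ = κ₁S/(√(|S|² + (a−ρ)²) − κ₁(a−ρ)). Then Δ := √(κ₁² + (κ₁²−1)|Dρ|²) satisfies Δ = (κ₁²|(S, a−ρ)| − κ₁(a−ρ))/(κ₁(a−ρ) − |(S, a−ρ)|), where |(S, a−ρ)| = √(|S|² + (a−ρ)²). -/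
open Matrix

lemma stmt12_aux (κ₁ t r s2 : ℝ) (hd : r - κ₁ * t ≠ 0) (hd' : κ₁ * t - r ≠ 0)
    (hr2 : r^2 = s2 + t^2) :
    κ₁^2 + (κ₁^2 - 1) * ((κ₁ / (r - κ₁ * t))^2 * s2)
      = ((κ₁^2 * r - κ₁ * t) / (κ₁ * t - r))^2 := by
  rw [div_pow, div_pow, eq_div_iff (pow_ne_zero 2 hd')]
  field_simp
  linear_combination (κ₁^2 * (1 - κ₁^2) * (κ₁*t - r)^2) * hr2

theorem stmt12 (κ₁ a ρ : ℝ) (S Dρ : Fin 2 → ℝ) (hκ : 1 < κ₁) (ha : 0 < a)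
    (h1 : a - ρ < a) (h2 : Real.sqrt (S ⬝ᵥ S) / Real.sqrt (κ₁^2 - 1) < a - ρ)
    (hDρ : Dρ = (κ₁ / (Real.sqrt (S ⬝ᵥ S + (a - ρ)^2) - κ₁ * (a - ρ))) • S) :
    Real.sqrt (κ₁^2 + (κ₁^2 - 1) * (Dρ ⬝ᵥ Dρ)) =
      (κ₁^2 * Real.sqrt (S ⬝ᵥ S + (a - ρ)^2) - κ₁ * (a - ρ)) /
        (κ₁ * (a - ρ) - Real.sqrt (S ⬝ᵥ S + (a - ρ)^2)) := by
  set s2 : ℝ := S ⬝ᵥ S with hs2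
  set t : ℝ := a - ρ with ht
  have hs2nn : 0 ≤ s2 := by
    rw [hs2, dotProduct]
    exact Finset.sum_nonneg fun i _ => mul_self_nonneg (S i)
  have hκsq : (0:ℝ) < κ₁^2 - 1 := by nlinarith
  have ht0 : 0 < t := lt_of_le_of_lt (by positivity) h2
  have h2' : Real.sqrt s2 < t * Real.sqrt (κ₁^2 - 1) := by
    rw [div_lt_iff₀ (Real.sqrt_pos.mpr hκsq)] at h2
    linarith
  have hs2lt : s2 < (κ₁^2 - 1) * t^2 := by
    nlinarith [mul_self_lt_mul_self (Real.sqrt_nonneg s2) h2',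
      Real.sq_sqrt hs2nn, Real.sq_sqrt hκsq.le, sq_nonneg (Real.sqrt (κ₁^2-1))]
  set r : ℝ := Real.sqrt (s2 + t^2) with hrdef
  have hr2 : r^2 = s2 + t^2 := Real.sq_sqrt (by positivity)
  have hrnn : 0 ≤ r := Real.sqrt_nonneg _
  have hrt : t ≤ r := by nlinarith [hr2, hrnn]
  have hrlt : r < κ₁ * t := by
    have h : r^2 < (κ₁ * t)^2 := by nlinarith [hr2]
    exact lt_of_pow_lt_pow_left₀ 2 (by positivity) h
  have hd : r - κ₁ * t ≠ 0 := by nlinarith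
  have hd' : κ₁ * t - r ≠ 0 := by nlinarith
  have hDD : Dρ ⬝ᵥ Dρ = (κ₁ / (r - κ₁ * t))^2 * s2 := by
    rw [hDρ, smul_dotProduct, dotProduct_smul, smul_eq_mul, smul_eq_mul, ← hs2]
    ring
  rw [hDD]
  have hY : 0 ≤ (κ₁^2 * r - κ₁ * t) / (κ₁ * t - r) := by
    apply div_nonneg
    · nlinarith
    · linarith
  rw [stmt12_aux κ₁ t r s2 hd hd' hr2]
  exact Real.sqrt_sq hY
end

section
/- Let κ₁ > 1, φ(y) = κ₁/(κ₁ − √(y+1)) for y ∈ [0, κ₁²−1), and φ' its derivative. Then for every vector y ∈ ℝⁿ with |y| < √(κ₁² − 1): I + ((κ₁²−1)/κ₁²)·φ(|y|²)²·(y⊗y) = (I + φ(|y|²)·(y⊗y))·(I + 2(φ'(|y|²)/φ(|y|²))·(y⊗y)). -/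
open Matrix

theorem stmt15 (κ₁ : ℝ) (hκ : 1 < κ₁) (n : ℕ) (y : Fin n → ℝ)
    (hy : Real.sqrt (y ⬝ᵥ y) < Real.sqrt (κ₁^2 - 1))
    (φ : ℝ → ℝ) (hφ : ∀ t, φ t = κ₁ / (κ₁ - Real.sqrt (t + 1))) :
    (1 : Matrix (Fin n) (Fin n) ℝ)
        + ((κ₁^2 - 1)/κ₁^2 * (φ (y ⬝ᵥ y))^2) • vecMulVec y y =
      ((1 : Matrix (Fin n) (Fin n) ℝ) + φ (y ⬝ᵥ y) • vecMulVec y y) *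
      ((1 : Matrix (Fin n) (Fin n) ℝ)
        + (2 * deriv φ (y ⬝ᵥ y) / φ (y ⬝ᵥ y)) • vecMulVec y y) := by
  set s := y ⬝ᵥ y with hs
  have hs0 : 0 ≤ s := Finset.sum_nonneg fun i _ => mul_self_nonneg _
  have hκ0 : (0:ℝ) < κ₁ := lt_trans one_pos hκ
  have hslt : s < κ₁^2 - 1 := by
    rwa [Real.sqrt_lt_sqrt_iff hs0] at hy
  set u := Real.sqrt (s + 1) with hu
  have hu2 : u^2 = s + 1 := Real.sq_sqrt (by linarith)
  have hu0' : (0:ℝ) ≤ u := Real.sqrt_nonneg _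
  have hu1 : (1:ℝ) ≤ u := by nlinarith
  have hu0 : (0:ℝ) < u := lt_of_lt_of_le one_pos hu1
  have huk : u < κ₁ := by
    have h1 : s + 1 < κ₁^2 := by linarith
    calc u < Real.sqrt (κ₁^2) := Real.sqrt_lt_sqrt (by linarith) h1
      _ = κ₁ := by rw [Real.sqrt_sq hκ0.le]
  have hune : κ₁ - u ≠ 0 := sub_ne_zero.mpr huk.ne'
  have hsq : HasDerivAt (fun t : ℝ => Real.sqrt (t + 1)) (1 / (2 * u)) s := by
    have h1 : HasDerivAt (fun t : ℝ => t + 1) 1 s := (hasDerivAt_id s).add_const 1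
    have h2 := (Real.hasDerivAt_sqrt (by positivity : s + 1 ≠ 0)).comp s h1
    simpa [hu, Function.comp_def] using h2
  have hg : HasDerivAt (fun t : ℝ => κ₁ - Real.sqrt (t + 1)) (-(1/(2*u))) s := by
    simpa [Pi.sub_def] using (hasDerivAt_const s κ₁).sub hsq
  have hφd : HasDerivAt φ (κ₁ / (2 * u * (κ₁ - u)^2)) s := by
    have hfun : φ = fun t => κ₁ / (κ₁ - Real.sqrt (t + 1)) := funext hφ
    rw [hfun]
    have h3 := (hasDerivAt_const s κ₁).div hg (by simpa [← hu] using hune)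
    refine h3.congr_deriv (Eq.symm ?_)
    rw [← hu]
    field_simp
    ring
  have hderiv : deriv φ s = κ₁ / (2 * u * (κ₁ - u)^2) := hφd.deriv
  have hφs : φ s = κ₁ / (κ₁ - u) := by rw [hφ, ← hu]
  have hMM : vecMulVec y y * vecMulVec y y = s • vecMulVec y y := by
    ext i j
    simp only [mul_apply, vecMulVec_apply, Matrix.smul_apply, smul_eq_mul, hs, dotProduct]
    rw [Finset.sum_mul]
    exact Finset.sum_congr rfl fun k _ => by ring
  have key : (κ₁^2 - 1)/κ₁^2 * (φ s)^2
      = φ s + 2 * deriv φ s / φ s + φ s * (2 * deriv φ s / φ s) * s := by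
    rw [hφs, hderiv]
    have hs' : s = u^2 - 1 := by linarith
    rw [hs']
    field_simp
    ring
  rw [key]
  simp only [mul_add, add_mul, one_mul, mul_one, Matrix.smul_mul, Matrix.mul_smul, hMM,
    smul_smul]
  module
end
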